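/- Let p>1 and g: ℝ → ℝ be continuous with g(0)=0, such that s ↦ g(s)/|s|^(p-1) is strictly increasing on ℝ∖{0}, and g(s)·s > 0 for s ≠ 0. Let G(s) = ∫₀^s g(t) dt and h(s) = (1/p)·g(s)·s − G(s). Then h is strictly decreasing on (−∞,0) and strictly increasing on (0,∞). -/
import Mathlib


open Real Set MeasureTheory

lemma key_mono (p : ℝ) (hp : 1 < p) (g : ℝ → ℝ) (hg : Continuous g)
    (hmono : StrictMonoOn (fun s : ℝ => g s / |s| ^ (p - 1)) {s : ℝ | s ≠ 0})
    (G h : ℝ → ℝ)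
    (hG : ∀ s : ℝ, G s = ∫ t in (0:ℝ)..s, g t)
    (hh : ∀ s : ℝ, h s = (1 / p) * g s * s - G s) :
    StrictMonoOn h (Ioi 0) := by
  intro a ha b hb hab
  simp only [mem_Ioi] at ha hb
  have hp0 : (0:ℝ) < p := by linarith
  set ra := g a / a ^ (p - 1) with hra
  set rb := g b / b ^ (p - 1) with hrb
  have hapow : (0:ℝ) < a ^ (p - 1) := rpow_pos_of_pos ha _
  have hbpow : (0:ℝ) < b ^ (p - 1) := rpow_pos_of_pos hb _
  have hrab : ra < rb := by
    have := hmono (show a ∈ {s : ℝ | s ≠ 0} from ne_of_gt ha)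
      (show b ∈ {s : ℝ | s ≠ 0} from ne_of_gt hb) hab
    simpa [hra, hrb, abs_of_pos ha, abs_of_pos hb] using this
  -- pointwise bound on [a,b]
  have hpt : ∀ t ∈ Icc a b, g t ≤ rb * t ^ (p - 1) := by
    intro t ht
    have ht0 : 0 < t := lt_of_lt_of_le ha ht.1
    have htpow : (0:ℝ) < t ^ (p - 1) := rpow_pos_of_pos ht0 _
    rcases eq_or_lt_of_le ht.2 with heq | hlt
    · subst heq
      rw [hrb, div_mul_cancel₀ _ (ne_of_gt htpow)]
    · have := hmono (show t ∈ {s : ℝ | s ≠ 0} from ne_of_gt ht0)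
        (show b ∈ {s : ℝ | s ≠ 0} from ne_of_gt hb) hlt
      simp only [abs_of_pos ht0, abs_of_pos hb] at this
      calc g t = g t / t ^ (p - 1) * t ^ (p - 1) := by
            rw [div_mul_cancel₀ _ (ne_of_gt htpow)]
        _ ≤ rb * t ^ (p - 1) := by
            exact mul_le_mul_of_nonneg_right (le_of_lt this) (le_of_lt htpow)
  -- integrability
  have hint1 : IntervalIntegrable g volume a b := hg.intervalIntegrable a b
  have hint2 : IntervalIntegrable (fun t : ℝ => rb * t ^ (p - 1)) volume a b := by
    apply ContinuousOn.intervalIntegrable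
    apply ContinuousOn.mul continuousOn_const
    apply ContinuousOn.rpow_const continuousOn_id
    intro x hx
    left
    have : (0:ℝ) < x := lt_of_lt_of_le (lt_min ha hb) hx.1
    exact ne_of_gt this
  have hI : (∫ t in a..b, g t) ≤ ∫ t in a..b, rb * t ^ (p - 1) :=
    intervalIntegral.integral_mono_on (le_of_lt hab) hint1 hint2 hpt
  have hIval : (∫ t in a..b, rb * t ^ (p - 1)) = rb * ((b ^ p - a ^ p) / p) := by
    rw [intervalIntegral.integral_const_mul, integral_rpow (Or.inl (by linarith))]
    norm_num
  have hGdiff : G b - G a = ∫ t in a..b, g t := by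
    rw [hG, hG, ← intervalIntegral.integral_add_adjacent_intervals
      (hg.intervalIntegrable 0 a) (hg.intervalIntegrable a b)]
    ring
  -- rewrite g a, g b
  have hga : g a * a = ra * a ^ p := by
    rw [hra, show p = (p-1)+1 by ring, rpow_add ha, rpow_one]
    field_simp
    ring
  have hgb : g b * b = rb * b ^ p := by
    rw [hrb, show p = (p-1)+1 by ring, rpow_add hb, rpow_one]
    field_simp
    ring
  have hap : (0:ℝ) < a ^ p := rpow_pos_of_pos ha _
  have hdiff : h b - h a = (1 / p) * (g b * b - g a * a) - (G b - G a) := by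
    rw [hh, hh]; ring
  have hfinal : 0 < h b - h a := by
    rw [hdiff, hGdiff, hga, hgb]
    have h1 : (∫ t in a..b, g t) ≤ rb * ((b ^ p - a ^ p) / p) := by
      rw [← hIval]; exact hI
    have h2 : 0 < a ^ p * (rb - ra) / p :=
      div_pos (mul_pos hap (by linarith)) hp0
    have hexp : (1 / p) * (rb * b ^ p - ra * a ^ p) - rb * ((b ^ p - a ^ p) / p)
        = a ^ p * (rb - ra) / p := by field_simp; ring
    nlinarith [h1, h2, hexp]
  linarith

theorem stmt_2 (p : ℝ) (hp : 1 < p) (g : ℝ → ℝ) (hg : Continuous g) (hg0 : g 0 = 0)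
    (hmono : StrictMonoOn (fun s : ℝ => g s / |s| ^ (p - 1)) {s : ℝ | s ≠ 0})
    (hsign : ∀ s : ℝ, s ≠ 0 → 0 < g s * s)
    (G h : ℝ → ℝ)
    (hG : ∀ s : ℝ, G s = ∫ t in (0:ℝ)..s, g t)
    (hh : ∀ s : ℝ, h s = (1 / p) * g s * s - G s) :
    StrictAntiOn h (Iio 0) ∧ StrictMonoOn h (Ioi 0) := by
  constructor
  · -- reduce to the positive case via reflection
    have hmono' : StrictMonoOn (fun s : ℝ => (-g (-s)) / |s| ^ (p - 1)) {s : ℝ | s ≠ 0} := by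
      intro x hx y hy hxy
      have hx' : -y ∈ {s : ℝ | s ≠ 0} := by simpa using neg_ne_zero.mpr hy
      have hy' : -x ∈ {s : ℝ | s ≠ 0} := by simpa using neg_ne_zero.mpr hx
      have := hmono hx' hy' (by linarith)
      simp only [abs_neg] at this
      have hxp : (0:ℝ) < |x| ^ (p - 1) := rpow_pos_of_pos (abs_pos.mpr hx) _
      have hyp : (0:ℝ) < |y| ^ (p - 1) := rpow_pos_of_pos (abs_pos.mpr hy) _
      simp only
      rw [div_lt_div_iff₀ hyp hxp] at this
      rw [div_lt_div_iff₀ hxp hyp]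
      linarith
    have hG' : ∀ s : ℝ, G (-s) = ∫ t in (0:ℝ)..s, -g (-t) := by
      intro s
      rw [intervalIntegral.integral_neg, intervalIntegral.integral_comp_neg g,
        hG, neg_zero, intervalIntegral.integral_symm]
    have hh' : ∀ s : ℝ, h (-s) = (1 / p) * (-g (-s)) * s - G (-s) := by
      intro s; rw [hh]; ring
    have hmain := key_mono p hp (fun s => -g (-s))
      ((hg.comp continuous_neg).neg) hmono' (fun s => G (-s)) (fun s => h (-s)) hG' hh'
    intro a ha b hb hab
    simp only [mem_Iio] at ha hb
    have := hmain (show -b ∈ Ioi (0:ℝ) by simpa using hb)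
      (show -a ∈ Ioi (0:ℝ) by simpa using ha) (by linarith)
    simpa using this
  · exact key_mono p hp g hg hmono G h hG hh
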